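/- arXiv:1403.0483 — 4 statements merged into one kernel-verified Lean document; each statement's English description precedes it below -/
import Mathlib

section
/- For nonnegative integers $i \le n$ and any $x$ not in $\{0,-1,\dots,-n\}$, $\sum_{k=0}^{n} \frac{(-n)_k}{k!} \binom{n-i+k}{n-i} \frac{1}{x+k} = \frac{n!\,(1-x)_{n-i}}{(n-i)!\,(x)_{n+1}}$. -/
open Finset

/-- Pochhammer symbol `(x)_k = x (x+1) ⋯ (x+k-1)`. -/
noncomputable def poch (x : ℝ) (k : ℕ) : ℝ := (ascPochhammer ℝ k).eval x

/-!
Write `T = n - i`. The polynomial `f(x) = (1 - x)_T` has degree `T ≤ n` and takes the value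
`T! * C(T + k, T)` at `x = -k`. The barycentric form of Lagrange interpolation at the nodes
`0, -1, …, -n`, whose nodal weights are `(-1)^k C(n, k) / n!`, writes `n! f(x) / (x)_{n+1}` as
`∑ₖ (-1)^k C(n, k) f(-k) / (x + k)`, which is `T!` times the left-hand side.
-/

open Polynomial Lagrange Nat

theorem ascPochhammer_eval_eq_prod_range {R : Type*} [CommSemiring R] (n : ℕ) (r : R) :
    (ascPochhammer R n).eval r = ∏ j ∈ range n, (r + j) := by
  induction n with
  | zero => simp
  | succ n ih => rw [ascPochhammer_succ_eval, ih, prod_range_succ]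

theorem ascPochhammer_eval_neg_natCast {R : Type*} [Ring R] (n k : ℕ) :
    (ascPochhammer R k).eval (-(n : R)) = (-1) ^ k * n.descFactorial k := by
  rw [ascPochhammer_eval_neg_eq_descPochhammer, descPochhammer_eval_eq_descFactorial]

theorem ascPochhammer_eval_natCast_add_one {R : Type*} [Semiring R] (k m : ℕ) :
    (ascPochhammer R m).eval ((k : R) + 1) = m ! * (k + m).choose m := by
  rw [← Nat.cast_add_one, ← ascPochhammer_eval_cast, ascPochhammer_nat_eq_ascFactorial,
    ascFactorial_eq_factorial_mul_choose]
  push_cast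
  rfl

theorem natDegree_ascPochhammer_comp_one_sub_X_le {R : Type*} [CommRing R] [IsDomain R]
    (m : ℕ) :
    ((ascPochhammer R m).comp (1 - X)).natDegree ≤ m := calc
  _ ≤ (ascPochhammer R m).natDegree * (1 - X : R[X]).natDegree := natDegree_comp_le
  _ ≤ m * 1 := Nat.mul_le_mul (ascPochhammer_natDegree R m).le
    ((natDegree_sub_le (1 : R[X]) X).trans (by simp))
  _ = m := mul_one m

theorem eval_neg_natCast_ascPochhammer_comp_one_sub_X {R : Type*} [CommRing R] (k m : ℕ) :
    ((ascPochhammer R m).comp (1 - X)).eval (-(k : R)) = m ! * (k + m).choose m := by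
  rw [eval_comp, eval_sub, eval_one, eval_X, sub_neg_eq_add, add_comm (1 : R),
    ascPochhammer_eval_natCast_add_one]

theorem prod_erase_range_natCast_sub {R : Type*} [CommRing R] {n k : ℕ} (hk : k ≤ n) :
    ∏ j ∈ (range (n + 1)).erase k, ((j : R) - k) = (-1) ^ k * k ! * (n - k)! := by
  have hsplit : (range (n + 1)).erase k = range k ∪ Ico (k + 1) (n + 1) := by
    ext j
    simp only [mem_erase, mem_range, mem_union, mem_Ico]
    omega
  have hdisj : Disjoint (range k) (Ico (k + 1) (n + 1)) := by
    simp only [disjoint_left, mem_range, mem_Ico]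
    omega
  have hbelow : ∏ j ∈ range k, ((j : R) - k) = (-1) ^ k * k ! := by
    simp_rw [sub_eq_neg_add, ← ascPochhammer_eval_eq_prod_range, ascPochhammer_eval_neg_natCast,
      descFactorial_self]
  have habove : ∏ j ∈ Ico (k + 1) (n + 1), ((j : R) - k) = (n - k)! := by
    rw [prod_Ico_eq_prod_range, show n + 1 - (k + 1) = n - k by omega,
      ← prod_range_add_one_eq_factorial, Nat.cast_prod]
    refine prod_congr rfl fun j _ ↦ ?_
    push_cast
    ring
  rw [hsplit, prod_union hdisj, hbelow, habove]

variable {K : Type*} [Field K] [CharZero K]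

theorem nodalWeight_range_neg_natCast {n k : ℕ} (hk : k ≤ n) :
    nodalWeight (range (n + 1)) (fun j : ℕ ↦ -(j : K)) k = (-1) ^ k * n.choose k / n ! := by
  have hfact : (n.choose k : K) * k ! * (n - k)! = n ! := by
    exact_mod_cast choose_mul_factorial_mul_factorial hk
  have hchoose : (n.choose k : K) ≠ 0 := Nat.cast_ne_zero.2 (choose_pos hk).ne'
  rw [nodalWeight, prod_inv_distrib]
  simp_rw [neg_sub_neg]
  rw [prod_erase_range_natCast_sub hk, ← hfact, mul_inv, mul_inv, ← inv_pow, inv_neg_one]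
  field_simp

theorem sum_choose_mul_eval_neg_div {n : ℕ} {f : K[X]} (hf : f.natDegree ≤ n) {x : K}
    (hx : ∀ k : ℕ, k ≤ n → x + k ≠ 0) :
    ∑ k ∈ range (n + 1), (-1) ^ k * n.choose k * f.eval (-(k : K)) / (x + k)
      = n ! * f.eval x / (ascPochhammer K (n + 1)).eval x := by
  have hinj : Set.InjOn (fun j : ℕ ↦ -(j : K)) (range (n + 1)) :=
    fun a _ b _ h ↦ Nat.cast_injective (neg_injective h)
  have hdeg : f.degree < #(range (n + 1)) := by
    rw [card_range]
    exact degree_le_natDegree.trans_lt (by exact_mod_cast Nat.lt_succ_of_le hf)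
  have hnode : ∀ k ∈ range (n + 1), x ≠ -(k : K) := fun k hk h ↦
    hx k (Nat.lt_succ_iff.mp (mem_range.mp hk)) (by rw [h, neg_add_cancel])
  have hnodal : (nodal (range (n + 1)) (fun j : ℕ ↦ -(j : K))).eval x
      = (ascPochhammer K (n + 1)).eval x := by
    simp_rw [eval_nodal, sub_neg_eq_add, ascPochhammer_eval_eq_prod_range]
  have hP : (ascPochhammer K (n + 1)).eval x ≠ 0 := by
    rw [ascPochhammer_eval_eq_prod_range, prod_ne_zero_iff]
    exact fun k hk ↦ hx k (Nat.lt_succ_iff.mp (mem_range.mp hk))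
  have hinterp := congrArg (eval x) (eq_interpolate hinj hdeg)
  rw [eval_interpolate_not_at_node _ hnode, hnodal] at hinterp
  rw [hinterp, mul_left_comm, mul_div_cancel_left₀ _ hP, mul_sum]
  refine sum_congr rfl fun k hk ↦ ?_
  have hk' := Nat.lt_succ_iff.mp (mem_range.mp hk)
  rw [nodalWeight_range_neg_natCast hk', sub_neg_eq_add]
  have hxk := hx k hk'
  have hn : (n ! : K) ≠ 0 := Nat.cast_ne_zero.2 (factorial_ne_zero n)
  field_simp

theorem stmt_0_general (n i : ℕ) (x : ℝ) (hx : ∀ k : ℕ, k ≤ n → x + k ≠ 0) :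
    ∑ k ∈ Finset.range (n + 1),
      poch (-(n : ℝ)) k / (k.factorial : ℝ) * ((n - i + k).choose (n - i) : ℝ) * (1 / (x + k))
    = (n.factorial : ℝ) * poch (1 - x) (n - i) /
        (((n - i).factorial : ℝ) * poch x (n + 1)) := by
  set f : ℝ[X] := (ascPochhammer ℝ (n - i)).comp (1 - X) with hf_def
  have hf : f.natDegree ≤ n := (natDegree_ascPochhammer_comp_one_sub_X_le _).trans (sub_le n i)
  have hTf : ((n - i)! : ℝ) ≠ 0 := Nat.cast_ne_zero.2 (factorial_ne_zero _)
  calc _ = (∑ k ∈ range (n + 1), (-1) ^ k * n.choose k * f.eval (-(k : ℝ)) / (x + k))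
        / (n - i)! := by
        rw [sum_div]
        refine sum_congr rfl fun k _ ↦ ?_
        have hkf : (k ! : ℝ) ≠ 0 := Nat.cast_ne_zero.2 (factorial_ne_zero _)
        rw [poch, ascPochhammer_eval_neg_natCast, descFactorial_eq_factorial_mul_choose, hf_def,
          eval_neg_natCast_ascPochhammer_comp_one_sub_X, add_comm k]
        push_cast
        field_simp
    _ = _ := by
      rw [sum_choose_mul_eval_neg_div hf hx, hf_def, eval_comp, eval_sub, eval_one, eval_X,
        poch, poch]
      field_simp

theorem stmt_0 (n i : ℕ) (hi : i ≤ n) (x : ℝ) (hx : ∀ k : ℕ, k ≤ n → x + k ≠ 0) :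
    ∑ k ∈ Finset.range (n + 1),
      poch (-(n : ℝ)) k / (k.factorial : ℝ) * ((n - i + k).choose (n - i) : ℝ) * (1 / (x + k))
    = (n.factorial : ℝ) * poch (1 - x) (n - i) /
        (((n - i).factorial : ℝ) * poch x (n + 1)) :=
  stmt_0_general n i x hx
end

section
/- Let $n, i, l$ be integers with $l \ge -1$, $0 \le i$, and $i + l < n$. Then for any polynomial $p$ of degree at most $i+l$, $\sum_{k=0}^{n} \frac{(-n)_k (n-i+1)_k}{(1)_k (l+2)_k} p(k) = 0$. -/
/-!
Since `(-n)_k / k! = (-1)^k (n choose k)` and, with `c = l + 2` and `d = n - i - l - 1`,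
`(c + d)_k / (c)_k = (c + k)_d / (c)_d` (both equal `(c)_(d+k) / ((c)_k (c)_d)`), the `k`-th
summand is `(-1)^k (n choose k) q(k) / (c)_d` for the polynomial `q(x) = (x + c)_d p(x)`, of degree
`< n`. Up to sign the sum is then the `n`-th forward difference of `q` at `0`, which vanishes.
-/

open Finset

open Polynomial

theorem Polynomial.sum_range_neg_one_pow_mul_choose_mul_eval_eq_zero {R : Type*} [CommRing R]
    {P : R[X]} {n : ℕ} (hP : P.degree < n) :
    ∑ k ∈ range (n + 1), (-1) ^ k * n.choose k * P.eval (k : R) = 0 := by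
  rcases eq_or_ne P 0 with rfl | hP0
  · simp
  have hΔ := congrFun (fwdDiff_iter_eq_zero_of_degree_lt ((natDegree_lt_iff_degree_lt hP0).2 hP)) 0
  rw [fwdDiff_iter_eq_sum_shift] at hΔ
  calc ∑ k ∈ range (n + 1), (-1) ^ k * n.choose k * P.eval (k : R)
      = (-1) ^ n * ∑ k ∈ range (n + 1),
          ((-1 : ℤ) ^ (n - k) * n.choose k) • P.eval (0 + k • (1 : R)) := by
        rw [mul_sum]
        refine sum_congr rfl fun k hk => ?_
        obtain ⟨j, rfl⟩ := Nat.exists_eq_add_of_le (mem_range_succ_iff.mp hk)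
        have hsign : (-1 : R) ^ k = (-1) ^ (k + j) * (-1) ^ j := by
          rw [← pow_add, add_assoc, ← two_mul, pow_add, pow_mul]
          simp
        simp only [hsign, add_tsub_cancel_left, zsmul_eq_mul, zero_add, nsmul_one]
        push_cast
        ring
    _ = 0 := by rw [hΔ, Pi.zero_apply, mul_zero]

theorem poch_add (x : ℝ) (a b : ℕ) : poch x (a + b) = poch x a * poch (x + a) b := by
  simpa [poch, eval_comp] using (congrArg (eval x) (ascPochhammer_mul ℝ a b)).symm

theorem poch_neg_natCast_div_poch_one (n k : ℕ) :
    poch (-n) k / poch 1 k = (-1) ^ k * n.choose k := by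
  have hk : (k.factorial : ℝ) ≠ 0 := by positivity
  rw [poch, poch, ascPochhammer_eval_neg_eq_descPochhammer, descPochhammer_eval_eq_descFactorial,
    ascPochhammer_eval_one, Nat.descFactorial_eq_factorial_mul_choose]
  field_simp
  push_cast
  ring

theorem poch_add_natCast_div_poch {c : ℝ} (hc : 0 < c) (d k : ℕ) :
    poch (c + d) k / poch c k = poch (c + k) d / poch c d := by
  have hk : poch c k ≠ 0 := (ascPochhammer_pos k c hc).ne'
  have hd : poch c d ≠ 0 := (ascPochhammer_pos d c hc).ne'
  rw [div_eq_div_iff hk hd, mul_comm, ← poch_add, add_comm, poch_add, mul_comm]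

theorem sum_poch_neg_natCast_mul_poch_add_div_mul_eval_eq_zero {n d m : ℕ} (hdm : d + m ≤ n)
    {c : ℝ} (hc : 0 < c) {p : ℝ[X]} (hp : p.degree < m) :
    ∑ k ∈ range (n + 1),
      poch (-(n : ℝ)) k * poch (c + d) k / (poch 1 k * poch c k) * p.eval (k : ℝ) = 0 := by
  set q := (ascPochhammer ℝ d).comp (X + C c) * p
  have hq : q.degree < n := by
    have hshift : ((ascPochhammer ℝ d).comp (X + C c)).degree = d := by
      rw [degree_eq_natDegree ((monic_ascPochhammer ℝ d).comp_X_add_C c).ne_zero, natDegree_comp,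
        natDegree_X_add_C, ascPochhammer_natDegree, mul_one]
    calc q.degree = d + p.degree := by rw [degree_mul, hshift]
      _ < d + m := WithBot.add_lt_add_left WithBot.coe_ne_bot hp
      _ ≤ n := by exact_mod_cast hdm
  have hterm : ∀ k : ℕ,
      poch (-(n : ℝ)) k * poch (c + d) k / (poch 1 k * poch c k) * p.eval (k : ℝ)
        = (poch c d)⁻¹ * ((-1) ^ k * n.choose k * q.eval (k : ℝ)) := by
    intro k
    rw [mul_div_mul_comm, poch_neg_natCast_div_poch_one, poch_add_natCast_div_poch hc]
    simp only [q, eval_mul, eval_comp, eval_add, eval_X, eval_C, poch, add_comm (k : ℝ) c]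
    ring
  rw [sum_congr rfl fun k _ => hterm k, ← mul_sum,
    sum_range_neg_one_pow_mul_choose_mul_eval_eq_zero hq, mul_zero]

theorem stmt_2 (n i : ℕ) (l : ℤ) (hl : -1 ≤ l) (hn : (i : ℤ) + l < n)
    (p : Polynomial ℝ) (hp : ∀ k : ℕ, (i : ℤ) + l < k → p.coeff k = 0) :
    ∑ k ∈ Finset.range (n + 1),
      poch (-(n : ℝ)) k * poch ((n : ℝ) - i + 1) k /
        (poch 1 k * poch ((l : ℝ) + 2) k) * p.eval (k : ℝ) = 0 := by
  obtain ⟨m, rfl⟩ : ∃ m : ℕ, l = m - 1 := ⟨(l + 1).toNat, by omega⟩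
  have hdeg : p.degree < ↑(i + m) :=
    (degree_lt_iff_coeff_zero p _).2 fun k hk => hp k (by omega)
  have hshift : (n : ℝ) - i + 1 = ((m - 1 : ℤ) : ℝ) + 2 + ↑(n - (i + m)) := by
    rw [Nat.cast_sub (by omega)]
    push_cast
    ring
  rw [hshift]
  exact sum_poch_neg_natCast_mul_poch_add_div_mul_eval_eq_zero (by omega) (by push_cast; linarith)
    hdeg
end

section
/- For an odd positive integer $i \le n$, define the polynomial $h^n_{n-i}(t) = \sum_{k=0}^{n} d^i_{n,k} t^k$ on $[0,1)$ where $d^i_{n,k} = (-1)^n \frac{\sqrt{2n-2i+1}}{(-n)_i} \frac{(-n)_k (n-i+1)_k}{(k!)^2} \prod_{m=0}^{(i-1)/2}(n+k+1-2m) \prod_{m=0}^{(i-3)/2}(n-k-1-2m)$. Then $\int_0^1 t^s h^n_{n-i}(t)\,dt = 0$ for every integer $0 \le s < n-i$. -/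
open Finset

/-- The coefficient `d^i_{n,k}` (for odd `i`): the product
`∏_{m=0}^{(i-1)/2}` has `(i+1)/2` factors and `∏_{m=0}^{(i-3)/2}` has `(i-1)/2` factors. -/
noncomputable def d (n i k : ℕ) : ℝ :=
  (-1) ^ n * Real.sqrt (2 * (n : ℝ) - 2 * i + 1) / poch (-(n : ℝ)) i *
    (poch (-(n : ℝ)) k * poch ((n : ℝ) - i + 1) k / ((k.factorial : ℝ)) ^ 2) *
    (∏ m ∈ Finset.range ((i + 1) / 2), ((n : ℝ) + k + 1 - 2 * m)) *
    (∏ m ∈ Finset.range ((i - 1) / 2), ((n : ℝ) - k - 1 - 2 * m))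

/-- The wavelet polynomial `h^n_{n-i}(t) = ∑_{k=0}^n d^i_{n,k} t^k` on `[0,1)`. -/
noncomputable def h (n i : ℕ) (t : ℝ) : ℝ := ∑ k ∈ Finset.range (n + 1), d n i k * t ^ k

/-! Integrating termwise, `∫₀¹ t^s h(t) dt = ∑ₖ d_k / (s + k + 1)`. Since `(-n)_k / k! = (-1)^k C(n,k)`
and `(n-i+1)_k / k! = (k+1)_{n-i} / (n-i)!` with `(k+1)_{n-i} = ∏_{j<n-i} (k+j+1)`, the denominator
`s + k + 1` cancels against the factor `j = s` of that product, and the summand becomes, up to a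
constant, `(-1)^k C(n,k) q(k)` with `q` a polynomial of degree at most `n - i - 1 + i < n`. Such an
alternating binomial sum is the `n`-th forward difference of `q` at `0`, hence vanishes. -/

open Finset Polynomial
open scoped Nat

lemma poch_neg_natCast (n k : ℕ) : poch (-(n : ℝ)) k = (-1) ^ k * k ! * n.choose k := by
  rw [poch, ascPochhammer_eval_neg_eq_descPochhammer, descPochhammer_eval_eq_descFactorial,
    Nat.descFactorial_eq_factorial_mul_choose]
  push_cast
  ring

lemma poch_natCast_add_one_mul_factorial (N k : ℕ) :
    poch ((N : ℝ) + 1) k * N ! = k ! * ∏ j ∈ range N, ((k : ℝ) + j + 1) := by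
  have key : N ! * (N + 1).ascFactorial k = k ! * ∏ j ∈ range N, (k + 1 + j) := by
    rw [Nat.factorial_mul_ascFactorial, add_comm, ← Nat.factorial_mul_ascFactorial,
      Nat.ascFactorial_eq_prod_range]
  rw [poch, ← Nat.cast_add_one, ascPochhammer_nat_eq_natCast_ascFactorial, mul_comm]
  exact_mod_cast key.trans (by simp_rw [add_right_comm])

lemma Polynomial.natDegree_prod_le_card {ι R : Type*} [CommSemiring R] (s : Finset ι)
    (f : ι → R[X]) (hf : ∀ i ∈ s, (f i).natDegree ≤ 1) :
    (∏ i ∈ s, f i).natDegree ≤ #s :=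
  (natDegree_prod_le _ _).trans (by simpa using sum_le_card_nsmul s _ 1 hf)

lemma Polynomial.sum_range_neg_one_pow_mul_choose_mul_eval {R : Type*} [CommRing R] {P : R[X]}
    {n : ℕ} (hP : P.natDegree < n) :
    ∑ k ∈ range (n + 1), (-1) ^ k * n.choose k * P.eval (k : R) = 0 := by
  have hΔ := congr_fun (fwdDiff_iter_eq_zero_of_degree_lt hP) 0
  rw [fwdDiff_iter_eq_sum_shift, Pi.zero_apply] at hΔ
  calc ∑ k ∈ range (n + 1), (-1) ^ k * n.choose k * P.eval (k : R)
      = (-1) ^ n *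
          ∑ k ∈ range (n + 1), ((-1 : ℤ) ^ (n - k) * n.choose k) • P.eval (0 + k • 1) := by
        rw [mul_sum]
        refine sum_congr rfl fun k hk => ?_
        obtain ⟨j, hj⟩ := Nat.exists_eq_add_of_le (mem_range_succ_iff.1 hk)
        rw [zero_add, nsmul_one, zsmul_eq_mul, hj, Nat.add_sub_cancel_left]
        push_cast
        linear_combination (-(-1) ^ k * (k + j).choose k * P.eval (k : R)) *
          (Even.neg_one_pow ⟨j, rfl⟩ : (-1 : R) ^ (j + j) = 1)
    _ = 0 := by rw [hΔ, mul_zero]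

lemma integral_pow_mul_sum_pow (s m : ℕ) (c : ℕ → ℝ) :
    ∫ t in (0 : ℝ)..1, t ^ s * ∑ k ∈ range m, c k * t ^ k =
      ∑ k ∈ range m, c k / (s + k + 1) := by
  simp_rw [mul_sum, mul_left_comm _ (c _), ← pow_add]
  rw [intervalIntegral.integral_finsetSum fun k _ =>
    Continuous.intervalIntegrable (by fun_prop) 0 1]
  refine sum_congr rfl fun k _ => ?_
  rw [intervalIntegral.integral_const_mul, integral_pow]
  push_cast
  ring

noncomputable def momentPoly (n i s : ℕ) : ℝ[X] :=
  (∏ j ∈ (range (n - i)).erase s, (X + C ((j : ℝ) + 1))) *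
    (∏ m ∈ range ((i + 1) / 2), (X + C ((n : ℝ) + 1 - 2 * m))) *
    ∏ m ∈ range ((i - 1) / 2), (C ((n : ℝ) - 1 - 2 * m) - X)

lemma natDegree_momentPoly_lt {n i s : ℕ} (hs : s < n - i) :
    (momentPoly n i s).natDegree < n := by
  have hX_add (a : ℝ) : (X + C a).natDegree ≤ 1 := (natDegree_X_add_C a).le
  have hC_sub (a : ℝ) : (C a - X).natDegree ≤ 1 := by
    rw [← neg_sub, natDegree_neg, natDegree_X_sub_C]
  have hA := natDegree_prod_le_card ((range (n - i)).erase s) _ fun j _ => hX_add ((j : ℝ) + 1)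
  have hB := natDegree_prod_le_card (range ((i + 1) / 2)) _ fun m _ =>
    hX_add ((n : ℝ) + 1 - 2 * m)
  have hC := natDegree_prod_le_card (range ((i - 1) / 2)) _ fun m _ =>
    hC_sub ((n : ℝ) - 1 - 2 * m)
  rw [card_erase_of_mem (mem_range.2 hs), card_range] at hA
  rw [card_range] at hB hC
  have hAB := natDegree_mul_le.trans (Nat.add_le_add hA hB)
  have hABC := natDegree_mul_le.trans (Nat.add_le_add hAB hC)
  rw [momentPoly]
  omega

lemma eval_momentPoly (n i s k : ℕ) :
    (momentPoly n i s).eval (k : ℝ) = (∏ j ∈ (range (n - i)).erase s, ((k : ℝ) + j + 1)) *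
      (∏ m ∈ range ((i + 1) / 2), ((n : ℝ) + k + 1 - 2 * m)) *
      ∏ m ∈ range ((i - 1) / 2), ((n : ℝ) - k - 1 - 2 * m) := by
  simp only [momentPoly, eval_mul, eval_prod, eval_add, eval_sub, eval_X, eval_C]
  congr 1; congr 1
  all_goals exact prod_congr rfl fun _ _ => by ring

lemma d_div_eq_mul_eval_momentPoly {n i s : ℕ} (hs : s < n - i) (k : ℕ) :
    d n i k / (s + k + 1) = (-1) ^ n * √(2 * n - 2 * i + 1) / poch (-(n : ℝ)) i / (n - i)! *
      ((-1) ^ k * n.choose k * (momentPoly n i s).eval (k : ℝ)) := by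
  have hcast : (n : ℝ) - i + 1 = ((n - i : ℕ) : ℝ) + 1 := by
    rw [Nat.cast_sub (by omega)]
  have hpoch := poch_natCast_add_one_mul_factorial (n - i) k
  rw [← mul_prod_erase _ _ (mem_range.2 hs)] at hpoch
  rw [d, hcast, poch_neg_natCast n k, eq_div_of_mul_eq (by positivity) hpoch, eval_momentPoly]
  field_simp
  ring

theorem stmt_5_general (n i s : ℕ) (hs : s < n - i) :
    ∫ t in (0:ℝ)..1, t ^ s * h n i t = 0 := by
  simp only [h]
  rw [integral_pow_mul_sum_pow, sum_congr rfl fun k _ => d_div_eq_mul_eval_momentPoly hs k,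
    ← mul_sum, sum_range_neg_one_pow_mul_choose_mul_eval (natDegree_momentPoly_lt hs), mul_zero]

theorem stmt_5 (n i s : ℕ) (hodd : Odd i) (hi : 0 < i) (hin : i ≤ n)
    (hs : s < n - i) :
    ∫ t in (0:ℝ)..1, t ^ s * h n i t = 0 :=
  stmt_5_general n i s hs
end

section
/- For an odd positive integer $i \le n$, the leading-coefficient normalization $\frac{(-n)_i\, h^n_{n-i}(t)}{\sqrt{2n-2i+1}}$ is a polynomial in $t$ with integer coefficients, where $h^n_{n-i}(t) = \sum_{k=0}^n d^i_{n,k} t^k$ and $d^i_{n,k} = (-1)^n \frac{\sqrt{2n-2i+1}}{(-n)_i} \frac{(-n)_k (n-i+1)_k}{(k!)^2} \prod_{m=0}^{(i-1)/2}(n+k+1-2m) \prod_{m=0}^{(i-3)/2}(n-k-1-2m)$. -/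
/-!
For an integer `a` the quotient `(a)_k / k!` is the binomial-ring coefficient `multichoose a k`,
hence an integer. So in `d^i_{n,k}` the factor `(-n)_k (n-i+1)_k / (k!)^2` is a product of two
integers, and once the normalisation `√(2n-2i+1) / (-n)_i` is cancelled only integers remain.
-/

open Finset

theorem poch_intCast_eq_factorial_mul_multichoose (a : ℤ) (k : ℕ) :
    poch a k = k.factorial * ((Ring.multichoose a k : ℤ) : ℝ) := by
  have hcast :=
    congrArg (Int.cast : ℤ → ℝ) (Ring.factorial_nsmul_multichoose_eq_ascPochhammer a k)
  rw [Polynomial.ascPochhammer_smeval_cast, Polynomial.ascPochhammer_smeval_eq_eval,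
    nsmul_eq_mul] at hcast
  push_cast at hcast
  rw [poch, hcast, ← ascPochhammer_map (Int.castRingHom ℝ), Polynomial.eval_intCast_map, eq_intCast,
    Int.cast_id]

def normalizedCoeff (n i k : ℕ) : ℤ :=
  (-1) ^ n * (Ring.multichoose (-n : ℤ) k * Ring.multichoose ((n : ℤ) - i + 1) k) *
    (∏ m ∈ range ((i + 1) / 2), ((n : ℤ) + k + 1 - 2 * m)) *
    (∏ m ∈ range ((i - 1) / 2), ((n : ℤ) - k - 1 - 2 * m))

theorem d_eq_mul_normalizedCoeff (n i k : ℕ) :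
    d n i k = Real.sqrt (2 * (n : ℝ) - 2 * i + 1) / poch (-(n : ℝ)) i * normalizedCoeff n i k := by
  have hneg : poch (-(n : ℝ)) k = k.factorial * ((Ring.multichoose (-n : ℤ) k : ℤ) : ℝ) := by
    exact_mod_cast poch_intCast_eq_factorial_mul_multichoose (-n) k
  have hshift : poch ((n : ℝ) - i + 1) k =
      k.factorial * ((Ring.multichoose ((n : ℤ) - i + 1) k : ℤ) : ℝ) := by
    exact_mod_cast poch_intCast_eq_factorial_mul_multichoose (n - i + 1) k
  have hk : (k.factorial : ℝ) ≠ 0 := by positivity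
  rw [d, normalizedCoeff, hneg, hshift]
  push_cast
  field_simp

theorem stmt_17_general (n i : ℕ) :
    ∀ k : ℕ, ∃ z : ℤ,
      poch (-(n : ℝ)) i * d n i k / Real.sqrt (2 * (n : ℝ) - 2 * i + 1) = (z : ℝ) := by
  intro k
  rw [d_eq_mul_normalizedCoeff]
  generalize Real.sqrt (2 * (n : ℝ) - 2 * i + 1) = s
  -- If `(-n)_i = 0` or `s = 0`, the left-hand side is `0` by the convention `x / 0 = 0`.
  by_cases hp : poch (-(n : ℝ)) i = 0
  · exact ⟨0, by simp [hp]⟩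
  by_cases hs : s = 0
  · exact ⟨0, by simp [hs]⟩
  exact ⟨normalizedCoeff n i k, by field_simp⟩

theorem stmt_17 (n i : ℕ) (hodd : Odd i) (hi : 0 < i) (hin : i ≤ n) :
    ∀ k : ℕ, ∃ z : ℤ,
      poch (-(n : ℝ)) i * d n i k / Real.sqrt (2 * (n : ℝ) - 2 * i + 1) = (z : ℝ) :=
  stmt_17_general n i
end
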